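/- Let K be a number field, let f, g : P^1 → P^1 be rational maps of degrees ≥ 2 defined over K, and let α ∈ P^1(K). Suppose that both Minkowski dimensions dim(G_{f,α}) and dim(G_{g,α}) exist, and that f and g share an iterate, i.e. f^m = g^n for some integers m ≥ 1 and n ≥ 1. Then dim(G_{f,α}) = 0 if and only if dim(G_{g,α}) = 0. -/

import Mathlib

open scoped Classical

noncomputable section

/-! ### Minkowski dimension machinery for groups of automorphisms of rooted trees

A rooted tree is presented by its levels `V 0, V 1, V 2, …` (with `V 0` the root level)
together with parent maps `V (n+1) → V n`.  An automorphism is a family of permutations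
of the levels commuting with the parent maps; it is in particular determined by a point of
`∀ k, Equiv.Perm (V k)`.  The restriction `r_n σ` of `σ` to the height-`n` subtree is the
tuple `(σ 0, …, σ n)`, and the natural metric is
`d(σ,τ) = inf { d!^{-(dⁿ-1)/(d-1)} : r_n σ = r_n τ }`. -/

/-- The exponent `(dⁿ - 1)/(d - 1) = 1 + d + ⋯ + d^(n-1)`. -/
def scaleExp (d n : ℕ) : ℕ := ∑ i ∈ Finset.range n, d ^ i

/-- The scale `ε_n = d!^{-(dⁿ-1)/(d-1)}`, i.e. `1/|Aut(Tₙᶜᵒᵐ)|`. -/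
def treeScale (d n : ℕ) : ℝ := ((d.factorial : ℝ) ^ scaleExp d n)⁻¹

/-- Two families of level permutations restrict to the same automorphism of the
height-`n` subtree. -/
def AgreeUpTo {V : ℕ → Type*} (n : ℕ) (σ τ : ∀ k, Equiv.Perm (V k)) : Prop :=
  ∀ k, k ≤ n → σ k = τ k

/-- The natural metric on automorphisms of a rooted `d`-ary tree:
`d(σ,τ) = inf { d!^{-(dⁿ-1)/(d-1)} : σ and τ agree on the height-n subtree }`. -/
def treeDist {V : ℕ → Type*} (d : ℕ) (σ τ : ∀ k, Equiv.Perm (V k)) : ℝ :=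
  sInf {x : ℝ | ∃ n : ℕ, AgreeUpTo n σ τ ∧ x = treeScale d n}

/-- `N_{ε_n}(G)`: the least number of balls of radius `ε_n = treeScale d n` needed to
cover `G`. -/
def coverNum {V : ℕ → Type*} (d : ℕ) (G : Set (∀ k, Equiv.Perm (V k))) (n : ℕ) : ℕ :=
  sInf {m : ℕ | ∃ s : Finset (∀ k, Equiv.Perm (V k)), s.card = m ∧
    G ⊆ ⋃ σ ∈ s, {τ | treeDist d σ τ ≤ treeScale d n}}

/-- The lower Minkowski dimension `liminf_{ε → 0} log N_ε(G) / log (1/ε)` (computed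
along the scales `ε_n` of the metric). -/
def dimLower {V : ℕ → Type*} (d : ℕ) (G : Set (∀ k, Equiv.Perm (V k))) : ℝ :=
  Filter.liminf
    (fun n : ℕ => Real.log (coverNum d G n : ℝ) / Real.log (1 / treeScale d n)) Filter.atTop

/-- The upper Minkowski dimension `limsup_{ε → 0} log N_ε(G) / log (1/ε)` (computed
along the scales `ε_n` of the metric). -/
def dimUpper {V : ℕ → Type*} (d : ℕ) (G : Set (∀ k, Equiv.Perm (V k))) : ℝ :=
  Filter.limsup
    (fun n : ℕ => Real.log (coverNum d G n : ℝ) / Real.log (1 / treeScale d n)) Filter.atTop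

/-- The Minkowski dimension of `G` exists and equals `x`. -/
def HasDim {V : ℕ → Type*} (d : ℕ) (G : Set (∀ k, Equiv.Perm (V k))) (x : ℝ) : Prop :=
  dimLower d G = x ∧ dimUpper d G = x

/-- `G` is closed for the natural metric. -/
def IsDistClosed {V : ℕ → Type*} (d : ℕ) (G : Set (∀ k, Equiv.Perm (V k))) : Prop :=
  ∀ σ, (∀ ε : ℝ, 0 < ε → ∃ τ ∈ G, treeDist d σ τ ≤ ε) → σ ∈ G

/-- The closure of `G` for the natural metric. -/
def distClosure {V : ℕ → Type*} (d : ℕ) (G : Set (∀ k, Equiv.Perm (V k))) :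
    Set (∀ k, Equiv.Perm (V k)) :=
  {σ | ∀ ε : ℝ, 0 < ε → ∃ τ ∈ G, treeDist d σ τ ≤ ε}

/-- `|r_n(G)|`: the cardinality of the restriction of `G` to the height-`n` subtree. -/
def levelCard {V : ℕ → Type*} (G : Set (∀ k, Equiv.Perm (V k))) (n : ℕ) : ℕ :=
  Nat.card ((fun (σ : ∀ k, Equiv.Perm (V k)) (k : Fin (n + 1)) => σ k.1) '' G)

end
noncomputable section

/-- A fixed algebraic closure `K̄` of `K`. -/
abbrev Kbar (K : Type*) [Field K] : Type _ := AlgebraicClosure K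

/-- The level-`n` vertices of the preimage tree of `α` under `φ`: the set
`φ^{-n}(α)`. -/
abbrev preV {Pts : Type*} (φ : Pts → Pts) (α : Pts) (n : ℕ) : Type _ :=
  {β : Pts // φ^[n] β = α}

/-- The parent map of the preimage tree: a vertex `β ∈ φ^{-(n+1)}(α)` is joined to
`φ(β) ∈ φ^{-n}(α)`. -/
def preParent {Pts : Type*} (φ : Pts → Pts) (α : Pts) (n : ℕ)
    (β : preV φ α (n + 1)) : preV φ α n :=
  ⟨φ β.1, by have h := β.2; rwa [Function.iterate_succ_apply] at h⟩

/-- The image `G_{φ,α}` of the arboreal Galois representation attached to `(φ, α)` over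
the base field `L` (an intermediate field of `K̄/K`): the set of families of level
permutations of the preimage tree induced by elements of `Gal(K̄/L)`, acting on points
via `act`. -/
def arbGal {K : Type*} [Field K] {Pts : Type*}
    (act : (Kbar K ≃ₐ[K] Kbar K) → Pts → Pts) (L : IntermediateField K (Kbar K))
    (φ : Pts → Pts) (α : Pts) : Set (∀ n, Equiv.Perm (preV φ α n)) :=
  {g | ∃ σ : Kbar K ≃ₐ[K] Kbar K, (∀ x ∈ L, σ x = x) ∧
    ∀ (n : ℕ) (β : preV φ α n), (g n β : Pts) = act σ (β : Pts)}

end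
noncomputable section

/-- The projective line `ℙ¹(L) = L ∪ {∞}`, with `none` the point at infinity. -/
abbrev P1 (L : Type*) := Option L

/-- The action on `ℙ¹(A)` of the rational map `f = p/q` with coefficients in `K`,
for an extension field `A` of `K`.  At a finite point `x` the value is `p(x)/q(x)`
(`∞` when `q(x) = 0`), and the value at `∞` is governed by the degrees of `p` and
`q` and their leading coefficients. -/
def ratAct {K : Type*} [Field K] (p q : Polynomial K)
    (A : Type*) [Field A] [Algebra K A] : P1 A → P1 A
  | some x =>
      if Polynomial.aeval x q = 0 then none
      else some (Polynomial.aeval x p / Polynomial.aeval x q)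
  | none =>
      if q.natDegree < p.natDegree then none
      else if p.natDegree < q.natDegree then some 0
      else some (algebraMap K A (p.leadingCoeff / q.leadingCoeff))

/-- The natural action of `Gal(K̄/K)` on `ℙ¹(K̄)`. -/
def galP1 {K : Type*} [Field K] (σ : Kbar K ≃ₐ[K] Kbar K) : P1 (Kbar K) → P1 (Kbar K) :=
  Option.map σ

/-- The inclusion `ℙ¹(K) ⊆ ℙ¹(K̄)`. -/
def P1K {K : Type*} [Field K] : P1 K → P1 (Kbar K) :=
  Option.map (algebraMap K (Kbar K))

/-- The set of `L`-rational points of `ℙ¹(K̄)`, for an intermediate field `L` of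
`K̄/K`. -/
def P1Rat {K : Type*} [Field K] (L : IntermediateField K (Kbar K)) : Set (P1 (Kbar K)) :=
  {β | β = none ∨ ∃ x ∈ L, β = some x}

/-- The Möbius transformation of `ℙ¹(F)` attached to `(a b; c e) ∈ PGL₂(F)`. -/
def moebius {F : Type*} [Field F] (a b c e : F) : P1 F → P1 F
  | some x => if c * x + e = 0 then none else some ((a * x + b) / (c * x + e))
  | none => if c = 0 then none else some (a / c)

/-- The normalizing constant `C_D = log(D!)/(D-1)`. -/
def Cconst (D : ℕ) : ℝ := Real.log (D.factorial : ℝ) / ((D : ℝ) - 1)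

/-- The ramification multiplicity at a point `γ ∈ ℙ¹(A)` of the degree-`d` rational
map `f = p/q` with coefficients in `K ⊆ A`:  at a finite point `γ` with `f(γ) = c`
finite it is the order of vanishing of `p - c·q` at `γ`; the cases involving `∞` are
handled using `q` and degrees.  A point is critical when this is at least `2`. -/
def multAt {K : Type*} [Field K] (p q : Polynomial K)
    (A : Type*) [Field A] [Algebra K A] (d : ℕ) : P1 A → ℕ
  | some x =>
      match ratAct p q A (some x) with
      | some c => ((p.map (algebraMap K A)) -
          Polynomial.C c * (q.map (algebraMap K A))).rootMultiplicity x
      | none => (q.map (algebraMap K A)).rootMultiplicity x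
  | none =>
      match ratAct p q A none with
      | some c => d - ((p.map (algebraMap K A)) -
          Polynomial.C c * (q.map (algebraMap K A))).natDegree
      | none => d - q.natDegree

end

/-!
The covering number of `G_{f,α}` at scale `ε_N` is the number of distinct restrictions of its
elements to the height-`N` subtree, and since `f` is onto, an element of the Galois group is
determined there by its action on the top level `f^{-N}(α)`. If `f^m = g^n`, then
`f^{-mk}(α) = g^{-nk}(α)`, so the covering numbers of the two groups agree at the matched levels
`mk` and `nk`. Counting the preimages of a point that avoids the finitely many critical values
(the images of the roots of the Wronskian `p q' - p' q`) gives `deg(f)^m = deg(g)^n`, so the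
normalising exponents `(dᴺ - 1)/(d - 1)` of the two metrics at the matched levels are comparable
up to a constant factor, and the ratios `log N_ε / log (1/ε)` of one group tend to `0` exactly
when those of the other do.
-/

open Filter Polynomial

section Tree

variable {V : ℕ → Type*}

lemma scaleExp_succ (d n : ℕ) : scaleExp d (n + 1) = scaleExp d n + d ^ n :=
  Finset.sum_range_succ _ _

lemma pow_pred_le_scaleExp {d n : ℕ} (hn : 1 ≤ n) : d ^ (n - 1) ≤ scaleExp d n :=
  Finset.single_le_sum (f := (d ^ ·)) (fun _ _ => Nat.zero_le _)
    (Finset.mem_range.mpr (Nat.sub_lt hn one_pos))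

lemma scaleExp_lt_pow {d : ℕ} (hd : 2 ≤ d) (n : ℕ) : scaleExp d n < d ^ n :=
  Nat.geomSum_lt hd fun _ => Finset.mem_range.mp

lemma scaleExp_strictMono {d : ℕ} (hd : 1 ≤ d) : StrictMono (scaleExp d) :=
  strictMono_nat_of_lt_succ fun n => by
    rw [scaleExp_succ]; exact Nat.lt_add_of_pos_right (Nat.pow_pos hd)

lemma treeScale_pos (d n : ℕ) : 0 < treeScale d n := by
  have := d.factorial_pos
  unfold treeScale; positivity

lemma treeScale_strictAnti {d : ℕ} (hd : 2 ≤ d) : StrictAnti (treeScale d) := fun a b hab => by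
  have h : (1 : ℝ) < d.factorial := by exact_mod_cast Nat.one_lt_factorial.mpr (by omega)
  exact inv_strictAnti₀ (by positivity)
    (pow_lt_pow_right₀ h (scaleExp_strictMono (by omega) hab))

lemma log_one_div_treeScale (d n : ℕ) :
    Real.log (1 / treeScale d n) = scaleExp d n * Real.log d.factorial := by
  rw [one_div, treeScale, inv_inv, Real.log_pow]

lemma AgreeUpTo.mono {n n' : ℕ} {σ τ : ∀ k, Equiv.Perm (V k)} (h : AgreeUpTo n' σ τ)
    (hn : n ≤ n') : AgreeUpTo n σ τ :=
  fun k hk => h k (hk.trans hn)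

lemma agreeUpTo_zero [Subsingleton (V 0)] (σ τ : ∀ k, Equiv.Perm (V k)) : AgreeUpTo 0 σ τ :=
  fun k hk => by obtain rfl := Nat.le_zero.mp hk; exact Subsingleton.elim _ _

lemma treeDist_le_treeScale_iff [Subsingleton (V 0)] {d : ℕ} (hd : 2 ≤ d)
    (σ τ : ∀ k, Equiv.Perm (V k)) (n : ℕ) :
    treeDist d σ τ ≤ treeScale d n ↔ AgreeUpTo n σ τ := by
  refine ⟨fun h => ?_, fun h => csInf_le ⟨0, ?_⟩ ⟨n, h, rfl⟩⟩
  · by_contra hn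
    obtain ⟨k, rfl⟩ : ∃ k, n = k + 1 := by
      cases n with
      | zero => exact absurd (agreeUpTo_zero σ τ) hn
      | succ k => exact ⟨k, rfl⟩
    have hk : treeScale d k ≤ treeDist d σ τ := by
      refine le_csInf ⟨_, 0, agreeUpTo_zero σ τ, rfl⟩ ?_
      rintro _ ⟨j, hj, rfl⟩
      exact (treeScale_strictAnti hd).antitone
        (Nat.le_of_lt_succ (lt_of_not_ge fun hkj => hn (hj.mono hkj)))
    exact (h.trans_lt (treeScale_strictAnti hd k.lt_succ_self)).not_ge hk
  · rintro _ ⟨j, -, rfl⟩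
    exact (treeScale_pos d j).le

lemma coverNum_eq_levelCard [∀ k, Finite (V k)] [Subsingleton (V 0)] {d : ℕ} (hd : 2 ≤ d)
    (G : Set (∀ k, Equiv.Perm (V k))) (n : ℕ) : coverNum d G n = levelCard G n := by
  set R := fun (σ : ∀ k, Equiv.Perm (V k)) (k : Fin (n + 1)) => σ k.1
  have hball (σ τ : ∀ k, Equiv.Perm (V k)) :
      treeDist d σ τ ≤ treeScale d n ↔ R σ = R τ := by
    rw [treeDist_le_treeScale_iff hd, funext_iff]
    exact ⟨fun h k => h k (Nat.le_of_lt_succ k.2),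
      fun h k hk => h ⟨k, Nat.lt_succ_of_le hk⟩⟩
  rw [levelCard, Nat.card_coe_set_eq]
  refine IsLeast.csInf_eq ⟨?_, ?_⟩
  · obtain ⟨s, hsG, hbij⟩ := Set.exists_subset_bijOn G R
    have hs : s.Finite := hbij.finite_iff_finite.mpr (Set.toFinite _)
    refine ⟨hs.toFinset, ?_, fun τ hτ => ?_⟩
    · rw [← Set.ncard_eq_toFinset_card _ hs, ← hbij.image_eq, hbij.injOn.ncard_image]
    · obtain ⟨σ, hσ, hστ⟩ := hbij.surjOn ⟨τ, hτ, rfl⟩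
      exact Set.mem_biUnion (hs.mem_toFinset.mpr hσ) ((hball σ τ).mpr hστ)
  · rintro _ ⟨s, rfl, hcover⟩
    have hsub : R '' G ⊆ R '' s := by
      rintro _ ⟨τ, hτ, rfl⟩
      obtain ⟨σ, hσ, hστ⟩ := Set.mem_iUnion₂.mp (hcover hτ)
      exact ⟨σ, hσ, (hball σ τ).mp hστ⟩
    calc (R '' G).ncard ≤ (R '' s).ncard := Set.ncard_le_ncard hsub (Set.toFinite _)
      _ ≤ (s : Set (∀ k, Equiv.Perm (V k))).ncard := Set.ncard_image_le s.finite_toSet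
      _ = s.card := Set.ncard_coe_finset s

lemma levelCard_mono [∀ k, Finite (V k)] (G : Set (∀ k, Equiv.Perm (V k))) :
    Monotone (levelCard G) := fun N N' hN => by
  have himage : (fun (σ : ∀ k, Equiv.Perm (V k)) (k : Fin (N + 1)) => σ k.1) '' G =
      (fun (t : ∀ k : Fin (N' + 1), Equiv.Perm (V k.1)) (k : Fin (N + 1)) =>
        t ⟨k.1, by omega⟩) '' ((fun σ (k : Fin (N' + 1)) => σ k.1) '' G) := by
    rw [← Set.image_comp]; rfl
  rw [levelCard, levelCard, himage, Nat.card_coe_set_eq, Nat.card_coe_set_eq]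
  exact Set.ncard_image_le (Set.toFinite _)

end Tree

section Limsup

variable {ι κ : Type*} {l : Filter ι} {l' : Filter κ}

lemma limsup_eq_zero_iff_of_nonneg [l.NeBot] {u : ι → ℝ} (hu : 0 ≤ u) :
    limsup u l = 0 ↔ (IsBoundedUnder (· ≤ ·) l u → Tendsto u l (nhds 0)) := by
  refine ⟨fun h hb => tendsto_order.2
    ⟨fun a ha => Eventually.of_forall fun i => ha.trans_le (hu i),
      fun a ha => eventually_lt_of_limsup_lt (h ▸ ha) hb⟩, fun h => ?_⟩
  by_cases hb : IsBoundedUnder (· ≤ ·) l u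
  · exact (h hb).limsup_eq
  · exact Real.limsup_of_not_isBoundedUnder hb

variable {u : κ → ℝ} {v : ι → ℝ} {φ : ι → κ} {C : ℝ}

lemma isBoundedUnder_le_of_le_mul_comp (hφ : Tendsto φ l l') (hC : 0 ≤ C)
    (hvu : ∀ᶠ i in l, v i ≤ C * u (φ i)) (hu : IsBoundedUnder (· ≤ ·) l' u) :
    IsBoundedUnder (· ≤ ·) l v := by
  obtain ⟨c, hc⟩ := hu
  refine ⟨C * c, eventually_map.2 ?_⟩
  filter_upwards [hvu, hφ.eventually (eventually_map.1 hc)] with i h1 h2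
  exact h1.trans (mul_le_mul_of_nonneg_left h2 hC)

lemma tendsto_zero_of_le_mul_comp (hv : 0 ≤ v) (hφ : Tendsto φ l l')
    (hvu : ∀ᶠ i in l, v i ≤ C * u (φ i)) (hu : Tendsto u l' (nhds 0)) :
    Tendsto v l (nhds 0) :=
  tendsto_of_tendsto_of_tendsto_of_le_of_le' tendsto_const_nhds
    (by simpa using (hu.comp hφ).const_mul C) (Eventually.of_forall hv) hvu

/-- Real `limsup` is `0` also for sequences unbounded above, hence the comparison in both
directions. -/
lemma limsup_eq_zero_of_le_mul_comp [l.NeBot] [l'.NeBot] (hu : 0 ≤ u) (hv : 0 ≤ v)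
    (hφ : Tendsto φ l l') {ψ : κ → ι} (hψ : Tendsto ψ l' l) {D : ℝ} (hD : 0 ≤ D)
    (hvu : ∀ᶠ i in l, v i ≤ C * u (φ i)) (huv : ∀ᶠ j in l', u j ≤ D * v (ψ j))
    (h : limsup u l' = 0) : limsup v l = 0 := by
  rw [limsup_eq_zero_iff_of_nonneg hu] at h
  rw [limsup_eq_zero_iff_of_nonneg hv]
  exact fun hb => tendsto_zero_of_le_mul_comp hv hφ hvu
    (h (isBoundedUnder_le_of_le_mul_comp hψ hD huv hb))

end Limsup

noncomputable def boxRatio (d : ℕ) (A : ℕ → ℕ) (n : ℕ) : ℝ :=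
  Real.log (A n) / Real.log (1 / treeScale d n)

lemma boxRatio_nonneg (d : ℕ) (A : ℕ → ℕ) : 0 ≤ boxRatio d A := fun n => by
  rw [boxRatio, log_one_div_treeScale]
  have := Real.log_natCast_nonneg d.factorial
  exact div_nonneg (Real.log_natCast_nonneg _) (by positivity)

lemma monotone_log_natCast : Monotone fun n : ℕ => Real.log n := fun a b hab => by
  rcases a.eq_zero_or_pos with rfl | ha
  · simpa using Real.log_natCast_nonneg b
  · exact Real.log_le_log (by positivity) (by exact_mod_cast hab)

lemma dimUpper_eq_limsup_boxRatio {V : ℕ → Type*} [∀ k, Finite (V k)] [Subsingleton (V 0)]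
    {d : ℕ} (hd : 2 ≤ d) (G : Set (∀ k, Equiv.Perm (V k))) :
    dimUpper d G = limsup (boxRatio d (levelCard G)) atTop := by
  simp only [dimUpper, coverNum_eq_levelCard hd]
  rfl

section Transfer

variable {df dg m n : ℕ} {A B : ℕ → ℕ}

/-- With `k = ⌊N/n⌋ + 1` we have `N ≤ n k ≤ N + n`, hence `B N ≤ B (n k) = A (m k)` and
`df ^ (m k) = dg ^ (n k) ≤ dg ^ (n + 1) dg ^ (N - 1)`. -/
lemma boxRatio_le_mul_boxRatio (hdf : 2 ≤ df) (hdg : 2 ≤ dg) (hm : 1 ≤ m) (hn : 1 ≤ n)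
    (hD : df ^ m = dg ^ n) (hB : Monotone B) (hAB : ∀ k, A (m * k) = B (n * k))
    {N : ℕ} (hN : 1 ≤ N) :
    boxRatio dg B N ≤ (dg ^ (n + 1) * Real.log df.factorial / Real.log dg.factorial) *
      boxRatio df A (m * (N / n + 1)) := by
  set k := N / n + 1
  have hNk : N ≤ n * k := (Nat.lt_mul_div_succ N hn).le
  have hkN : n * k ≤ N + n := by
    rw [Nat.mul_succ]; exact Nat.add_le_add_right (Nat.mul_div_le N n) n
  have hE : scaleExp df (m * k) ≤ dg ^ (n + 1) * scaleExp dg N :=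
    calc scaleExp df (m * k) ≤ df ^ (m * k) := (scaleExp_lt_pow hdf _).le
      _ = dg ^ (n * k) := by rw [pow_mul, pow_mul, hD]
      _ ≤ dg ^ (n + 1 + (N - 1)) := Nat.pow_le_pow_right (by omega) (by omega)
      _ ≤ dg ^ (n + 1) * scaleExp dg N := by
        rw [pow_add]; exact Nat.mul_le_mul_left _ (pow_pred_le_scaleExp hN)
  have hEf : 0 < scaleExp df (m * k) :=
    (Nat.zero_le _).trans_lt (scaleExp_strictMono (by omega) (Nat.mul_pos hm (N / n).succ_pos))
  have hEg : 0 < scaleExp dg N := (Nat.zero_le _).trans_lt (scaleExp_strictMono (by omega) hN)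
  have hLf : 0 < Real.log df.factorial :=
    Real.log_pos (by exact_mod_cast Nat.one_lt_factorial.mpr (by omega))
  have hLg : 0 < Real.log dg.factorial :=
    Real.log_pos (by exact_mod_cast Nat.one_lt_factorial.mpr (by omega))
  have hlog : Real.log (B N) ≤ Real.log (A (m * k)) := hAB k ▸ monotone_log_natCast (hB hNk)
  have hA0 := Real.log_natCast_nonneg (A (m * k))
  simp only [boxRatio, log_one_div_treeScale]
  calc Real.log (B N) / (scaleExp dg N * Real.log dg.factorial)
      ≤ Real.log (A (m * k)) / (scaleExp dg N * Real.log dg.factorial) := by gcongr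
    _ ≤ Real.log (A (m * k)) / (scaleExp df (m * k) / dg ^ (n + 1) * Real.log dg.factorial) := by
        gcongr
        exact (div_le_iff₀' (by positivity)).2 (by exact_mod_cast hE)
    _ = _ := by field_simp

lemma limsup_boxRatio_eq_zero_iff (hdf : 2 ≤ df) (hdg : 2 ≤ dg) (hm : 1 ≤ m) (hn : 1 ≤ n)
    (hD : df ^ m = dg ^ n) (hA : Monotone A) (hB : Monotone B)
    (hAB : ∀ k, A (m * k) = B (n * k)) :
    limsup (boxRatio df A) atTop = 0 ↔ limsup (boxRatio dg B) atTop = 0 := by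
  have tendsto_index {a b : ℕ} (ha : 1 ≤ a) (hb : 1 ≤ b) :
      Tendsto (fun N => a * (N / b + 1)) atTop atTop :=
    tendsto_atTop_mono (fun N => (Nat.le_succ _).trans (Nat.le_mul_of_pos_left _ ha))
      (Nat.tendsto_div_const_atTop (by omega))
  have hlogf := Real.log_natCast_nonneg df.factorial
  have hlogg := Real.log_natCast_nonneg dg.factorial
  have hgf : ∀ᶠ N in atTop, boxRatio dg B N ≤ (dg ^ (n + 1) * Real.log df.factorial /
      Real.log dg.factorial) * boxRatio df A (m * (N / n + 1)) :=
    eventually_atTop.2 ⟨1, fun N => boxRatio_le_mul_boxRatio hdf hdg hm hn hD hB hAB⟩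
  have hfg : ∀ᶠ N in atTop, boxRatio df A N ≤ (df ^ (m + 1) * Real.log dg.factorial /
      Real.log df.factorial) * boxRatio dg B (n * (N / m + 1)) :=
    eventually_atTop.2 ⟨1, fun N =>
      boxRatio_le_mul_boxRatio hdg hdf hn hm hD.symm hA fun k => (hAB k).symm⟩
  exact ⟨limsup_eq_zero_of_le_mul_comp (boxRatio_nonneg _ _) (boxRatio_nonneg _ _)
      (tendsto_index hm hn) (tendsto_index hn hm) (by positivity) hgf hfg,
    limsup_eq_zero_of_le_mul_comp (boxRatio_nonneg _ _) (boxRatio_nonneg _ _)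
      (tendsto_index hn hm) (tendsto_index hm hn) (by positivity) hfg hgf⟩

end Transfer

section FiberCount

variable {α : Type*} {f : α → α} {d : ℕ}

lemma finite_preimage_iterate (hf : ∀ c, (f ⁻¹' {c}).Finite) (m : ℕ) (c : α) :
    (f^[m] ⁻¹' {c}).Finite := by
  induction m with
  | zero => simp
  | succ m ih =>
    rw [Function.iterate_succ, Set.preimage_comp]
    exact ih.preimage' fun b _ => hf b

lemma ncard_preimage_eq_mul (hf : ∀ c, (f ⁻¹' {c}).Finite) {s : Set α} (hs : s.Finite)
    (hd : ∀ b ∈ s, (f ⁻¹' {b}).ncard = d) : (f ⁻¹' s).ncard = d * s.ncard := by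
  rw [← Set.biUnion_preimage_singleton, hs.ncard_biUnion (fun b _ => hf b)
    (Set.pairwiseDisjoint_fiber f s), finsum_mem_congr rfl hd, ← finsum_one, mul_finsum_mem]
  simp

lemma finite_setOf_ncard_preimage_iterate_ne (hf : ∀ c, (f ⁻¹' {c}).Finite)
    (hbad : {c | (f ⁻¹' {c}).ncard ≠ d}.Finite) (m : ℕ) :
    {c | (f^[m] ⁻¹' {c}).ncard ≠ d ^ m}.Finite := by
  induction m with
  | zero => simp
  | succ m ih =>
    refine (ih.union (hbad.image f^[m])).subset fun c hc => ?_
    by_contra hgood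
    simp only [Set.mem_union, Set.mem_ofPred_eq, Set.mem_image, not_or, not_not, not_exists,
      not_and] at hgood
    apply hc
    rw [Function.iterate_succ, Set.preimage_comp, pow_succ', ← hgood.1,
      ncard_preimage_eq_mul hf (finite_preimage_iterate hf m c)]
    intro b hb
    by_contra hb'
    exact hgood.2 b hb' hb

lemma pow_eq_pow_of_iterate_eq [Infinite α] {g : α → α} {e m n : ℕ}
    (hf : ∀ c, (f ⁻¹' {c}).Finite) (hg : ∀ c, (g ⁻¹' {c}).Finite)
    (hfd : {c | (f ⁻¹' {c}).ncard ≠ d}.Finite) (hge : {c | (g ⁻¹' {c}).ncard ≠ e}.Finite)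
    (h : f^[m] = g^[n]) : d ^ m = e ^ n := by
  obtain ⟨c, hc⟩ := ((finite_setOf_ncard_preimage_iterate_ne hf hfd m).union
    (finite_setOf_ncard_preimage_iterate_ne hg hge n)).infinite_compl.nonempty
  simp only [Set.mem_compl_iff, Set.mem_union, Set.mem_ofPred_eq, not_or, not_not] at hc
  rw [← hc.1, ← hc.2, h]

end FiberCount

section RatAct

lemma ratAct_map {K A : Type*} [Field K] [Field A] [Algebra K A] (p q : K[X]) :
    ratAct p q A = ratAct (p.map (algebraMap K A)) (q.map (algebraMap K A)) A := by
  funext x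
  cases x with
  | some x => simp only [ratAct, aeval_map_algebraMap]
  | none => simp [ratAct, natDegree_map, leadingCoeff_map, map_div₀]

variable {F : Type*} [Field F] {p q : F[X]}

lemma ne_zero_of_isCoprime (hpq : IsCoprime p q) (hd : 0 < max p.natDegree q.natDegree) :
    p ≠ 0 ∧ q ≠ 0 := by
  constructor <;> rintro rfl
  · have := natDegree_eq_zero_of_isUnit (isCoprime_zero_left.mp hpq); simp_all
  · have := natDegree_eq_zero_of_isUnit (isCoprime_zero_right.mp hpq); simp_all

lemma sub_C_mul_ne_zero (hpq : IsCoprime p q) (hd : 0 < max p.natDegree q.natDegree) (v : F) :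
    p - C v * q ≠ 0 := by
  intro h
  rw [sub_eq_zero] at h
  have hq : IsUnit q := hpq.isUnit_of_dvd' (h ▸ dvd_mul_left q (C v)) dvd_rfl
  have hq0 := natDegree_eq_zero_of_isUnit hq
  have hp0 : p.natDegree = 0 := by
    rw [h]; exact Nat.le_zero.mp ((natDegree_C_mul_le v q).trans_eq hq0)
  omega

lemma ratAct_some_eq_none_iff (x : F) : ratAct p q F (some x) = none ↔ q.IsRoot x := by
  rw [IsRoot.def, ← coe_aeval_eq_eval, ratAct]
  split_ifs <;> simp_all

lemma ratAct_some_eq_some_iff (hpq : IsCoprime p q) (x v : F) :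
    ratAct p q F (some x) = some v ↔ (p - C v * q).IsRoot x := by
  have hx : ¬ (p.eval x = 0 ∧ q.eval x = 0) := fun ⟨hp, hq⟩ => by
    obtain ⟨a, b, hab⟩ := hpq
    simpa [hp, hq] using congrArg (eval x) hab
  rw [IsRoot.def, eval_sub, eval_mul, eval_C, sub_eq_zero, ← coe_aeval_eq_eval, ratAct]
  split_ifs with hq
  · simp only [false_iff]
    rw [hq, mul_zero]
    exact fun hp => hx ⟨hp, hq⟩
  · rw [Option.some.injEq, div_eq_iff hq, eq_comm]

lemma ratAct_none_eq_some_iff (hq : q ≠ 0) (v : F) :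
    ratAct p q F none = some v ↔
      p.coeff (max p.natDegree q.natDegree) = v * q.coeff (max p.natDegree q.natDegree) := by
  have hq' := leadingCoeff_ne_zero.mpr hq
  unfold ratAct
  split_ifs with h₁ h₂
  · have hp : p ≠ 0 := by rintro rfl; simp at h₁
    rw [max_eq_left h₁.le, coeff_eq_zero_of_natDegree_lt h₁, mul_zero]
    simpa using hp
  · rw [max_eq_right h₂.le, coeff_eq_zero_of_natDegree_lt h₂, ← leadingCoeff,
      Option.some.injEq, eq_comm, eq_comm (a := (0 : F)), mul_eq_zero, or_iff_left hq']
  · rw [show p.natDegree = q.natDegree by omega, max_self, ← leadingCoeff,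
      show q.natDegree = p.natDegree by omega, ← leadingCoeff]
    simp [div_eq_iff hq']

lemma natDegree_sub_C_mul_le (v : F) :
    (p - C v * q).natDegree ≤ max p.natDegree q.natDegree :=
  (natDegree_sub_le _ _).trans (max_le_max le_rfl (natDegree_C_mul_le v q))

lemma ratAct_none_eq_some_iff_natDegree_lt (hq : q ≠ 0) (hd : 0 < max p.natDegree q.natDegree)
    (v : F) :
    ratAct p q F none = some v ↔ (p - C v * q).natDegree < max p.natDegree q.natDegree := by
  rw [ratAct_none_eq_some_iff hq, ← sub_eq_zero, ← coeff_C_mul, ← coeff_sub]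
  refine ⟨fun h => ?_, coeff_eq_zero_of_natDegree_lt⟩
  refine (natDegree_sub_C_mul_le v).lt_of_ne fun hdeg => ?_
  rw [← hdeg, ← leadingCoeff, leadingCoeff_eq_zero] at h
  rw [h, natDegree_zero] at hdeg
  omega

lemma ratAct_fiber_finite (hpq : IsCoprime p q) (hd : 0 < max p.natDegree q.natDegree)
    (c : P1 F) : (ratAct p q F ⁻¹' {c}).Finite := by
  obtain ⟨r, hr, hroot⟩ :
      ∃ r : F[X], r ≠ 0 ∧ ∀ x, ratAct p q F (some x) = c → r.IsRoot x := by
    cases c with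
    | none => exact ⟨q, (ne_zero_of_isCoprime hpq hd).2, (ratAct_some_eq_none_iff · |>.mp)⟩
    | some v => exact ⟨_, sub_C_mul_ne_zero hpq hd v, (ratAct_some_eq_some_iff hpq · v |>.mp)⟩
  refine (((finite_setOfPred_isRoot hr).image some).insert none).subset ?_
  rintro (_ | x) hx
  · exact Set.mem_insert _ _
  · exact Set.mem_insert_of_mem _ ⟨x, hroot x hx, rfl⟩

lemma ratAct_surjective [IsAlgClosed F] (hpq : IsCoprime p q)
    (hd : 0 < max p.natDegree q.natDegree) : Function.Surjective (ratAct p q F) := by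
  have exists_root (r : F[X]) (hr : r.natDegree ≠ 0) : ∃ x, r.IsRoot x :=
    IsAlgClosed.exists_root r fun h => hr (natDegree_eq_of_degree_eq_some h)
  rintro (_ | v)
  · by_cases hq : q.natDegree = 0
    · exact ⟨none, by rw [ratAct, if_pos (by omega)]⟩
    · obtain ⟨x, hx⟩ := exists_root q hq
      exact ⟨some x, (ratAct_some_eq_none_iff x).mpr hx⟩
  · by_cases hr : (p - C v * q).natDegree = 0
    · exact ⟨none, (ratAct_none_eq_some_iff_natDegree_lt (ne_zero_of_isCoprime hpq hd).2 hd
        v).mpr (hr ▸ hd)⟩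
    · obtain ⟨x, hx⟩ := exists_root _ hr
      exact ⟨some x, (ratAct_some_eq_some_iff hpq x v).mpr hx⟩

lemma wronskian_ne_zero [CharZero F] (hpq : IsCoprime p q)
    (hd : 0 < max p.natDegree q.natDegree) : p * derivative q - derivative p * q ≠ 0 := by
  obtain ⟨hp, -⟩ := ne_zero_of_isCoprime hpq hd
  intro h
  rw [sub_eq_zero] at h
  have hp' : derivative p = 0 :=
    dvd_derivative_iff.mp (hpq.dvd_of_dvd_mul_right ⟨derivative q, h.symm⟩)
  rw [hp', zero_mul, mul_eq_zero, or_iff_right hp] at h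
  have := derivative_eq_zero.mp hp'
  have := derivative_eq_zero.mp h
  omega

/-- The values `p(x)/q(x)` at the roots `x` of the Wronskian: the finite critical values of
`p/q`, together with the junk value `0` at roots where `q` vanishes. -/
def critValues (p q : F[X]) : Set F :=
  (fun x => p.eval x / q.eval x) '' {x | (p * derivative q - derivative p * q).IsRoot x}

lemma critValues_finite [CharZero F] (hpq : IsCoprime p q)
    (hd : 0 < max p.natDegree q.natDegree) : (critValues p q).Finite :=
  (finite_setOfPred_isRoot (wronskian_ne_zero hpq hd)).image _

lemma ratAct_preimage_some (hpq : IsCoprime p q) {v : F} (hv : ratAct p q F none ≠ some v) :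
    ratAct p q F ⁻¹' {some v} = some '' {x | (p - C v * q).IsRoot x} := by
  ext (_ | x)
  · simp [hv]
  · simp [ratAct_some_eq_some_iff hpq]

/-- A multiple root `x` of `p - v q` is a root of the Wronskian with `v = p(x)/q(x)`. -/
lemma roots_sub_C_mul_nodup (hpq : IsCoprime p q) (hd : 0 < max p.natDegree q.natDegree) {v : F}
    (hv : v ∉ critValues p q) :
    (p - C v * q).roots.Nodup := by
  rw [Multiset.nodup_iff_count_le_one]
  intro x
  rw [count_roots]
  by_contra! hx
  obtain ⟨h0, h1⟩ := (one_lt_rootMultiplicity_iff_isRoot (sub_C_mul_ne_zero hpq hd v)).mp hx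
  have hqx : q.eval x ≠ 0 := fun hq => by
    simpa using ((ratAct_some_eq_none_iff x).mpr hq).symm.trans
      ((ratAct_some_eq_some_iff hpq x v).mpr h0)
  simp only [IsRoot.def, eval_sub, eval_mul, eval_C, derivative_sub, derivative_C_mul] at h0 h1
  refine hv ⟨x, ?_, (div_eq_iff hqx).mpr (by linear_combination h0)⟩
  simp only [Set.mem_ofPred_eq, IsRoot.def, eval_sub, eval_mul]
  linear_combination (derivative q).eval x * h0 - q.eval x * h1

lemma ncard_ratAct_preimage_some [IsAlgClosed F] (hpq : IsCoprime p q)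
    (hd : 0 < max p.natDegree q.natDegree) {v : F} (hinf : ratAct p q F none ≠ some v)
    (hv : v ∉ critValues p q) :
    (ratAct p q F ⁻¹' {some v}).ncard = max p.natDegree q.natDegree := by
  have hr := sub_C_mul_ne_zero hpq hd v
  have hroots : {x | (p - C v * q).IsRoot x} = ((p - C v * q).roots.toFinset : Set F) := by
    ext x; simp [mem_roots', hr]
  rw [ratAct_preimage_some hpq hinf, (Option.some_injective F).injOn.ncard_image, hroots,
    Set.ncard_coe_finset, Multiset.toFinset_card_of_nodup (roots_sub_C_mul_nodup hpq hd hv),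
    IsAlgClosed.card_roots_eq_natDegree]
  exact (natDegree_sub_C_mul_le v).antisymm (not_lt.mp fun hlt => hinf
    ((ratAct_none_eq_some_iff_natDegree_lt (ne_zero_of_isCoprime hpq hd).2 hd v).mpr hlt))

lemma finite_setOf_ncard_ratAct_preimage_ne [IsAlgClosed F] [CharZero F] (hpq : IsCoprime p q)
    (hd : 0 < max p.natDegree q.natDegree) :
    {c | (ratAct p q F ⁻¹' {c}).ncard ≠ max p.natDegree q.natDegree}.Finite := by
  refine ((((critValues_finite hpq hd).image some).insert (ratAct p q F none)).insert
    none).subset ?_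
  rintro (_ | v) hc
  · exact Set.mem_insert _ _
  refine Set.mem_insert_of_mem _ ?_
  by_contra h
  simp only [Set.mem_insert_iff, Set.mem_image, Option.some.injEq, exists_eq_right, not_or] at h
  exact hc (ncard_ratAct_preimage_some hpq hd (Ne.symm h.1) h.2)

end RatAct

lemma exists_isCoprime_ratAct_eq {K A : Type*} [Field K] [Field A] [Algebra K A] {p q : K[X]}
    (hpq : IsCoprime p q) : ∃ P Q : A[X], IsCoprime P Q ∧
      max P.natDegree Q.natDegree = max p.natDegree q.natDegree ∧ ratAct p q A = ratAct P Q A :=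
  ⟨p.map (algebraMap K A), q.map (algebraMap K A), hpq.map (mapRingHom (algebraMap K A)),
    by simp only [natDegree_map], ratAct_map p q⟩

lemma max_natDegree_pow_eq_of_iterate_eq {F : Type*} [Field F] [IsAlgClosed F] [CharZero F]
    {p q r s : F[X]} (hpq : IsCoprime p q) (hrs : IsCoprime r s)
    (hpq₀ : 0 < max p.natDegree q.natDegree) (hrs₀ : 0 < max r.natDegree s.natDegree)
    {m n : ℕ} (h : (ratAct p q F)^[m] = (ratAct r s F)^[n]) :
    max p.natDegree q.natDegree ^ m = max r.natDegree s.natDegree ^ n :=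
  pow_eq_pow_of_iterate_eq (ratAct_fiber_finite hpq hpq₀) (ratAct_fiber_finite hrs hrs₀)
    (finite_setOf_ncard_ratAct_preimage_ne hpq hpq₀)
    (finite_setOf_ncard_ratAct_preimage_ne hrs hrs₀) h

lemma Nat.card_range_eq_of_eq_iff {Γ X Y : Type*} {u : Γ → X} {w : Γ → Y}
    (h : ∀ σ τ, u σ = u τ ↔ w σ = w τ) :
    Nat.card (Set.range u) = Nat.card (Set.range w) :=
  Nat.card_congr ((Setoid.quotientKerEquivRange u).symm.trans
    ((Quotient.congrRight h).trans (Setoid.quotientKerEquivRange w)))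

instance {Pts : Type*} (φ : Pts → Pts) (a : Pts) : Subsingleton (preV φ a 0) :=
  ⟨fun β γ => Subtype.ext (β.2.trans γ.2.symm)⟩

lemma preV_finite {Pts : Type*} {φ : Pts → Pts} (hφ : ∀ c, (φ ⁻¹' {c}).Finite) (a : Pts)
    (k : ℕ) : Finite (preV φ a k) :=
  (finite_preimage_iterate hφ k a).to_subtype

section Galois

variable {K : Type*} [Field K]

lemma galP1_commute_ratAct (p q : K[X]) (σ : Kbar K ≃ₐ[K] Kbar K) :
    Function.Commute (galP1 σ) (ratAct p q (Kbar K)) := by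
  rintro (_ | x)
  · simp only [galP1, Option.map_none, ratAct]
    split_ifs <;> simp
  · have hσ (r : K[X]) : aeval (σ x) r = σ (aeval x r) :=
      aeval_algHom_apply (σ : Kbar K →ₐ[K] Kbar K) x r
    simp only [galP1, Option.map_some, ratAct, hσ, map_eq_zero_iff _ σ.injective]
    split_ifs <;> simp [map_div₀]

lemma galP1_P1K (σ : Kbar K ≃ₐ[K] Kbar K) (α : P1 K) : galP1 σ (P1K α) = P1K α := by
  cases α <;> simp [galP1, P1K]

lemma galP1_injective (σ : Kbar K ≃ₐ[K] Kbar K) : Function.Injective (galP1 σ) :=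
  Option.map_injective σ.injective

variable {φ : P1 (Kbar K) → P1 (Kbar K)} {a : P1 (Kbar K)}

def galLevelPerm (hφ : ∀ σ, Function.Commute (galP1 σ) φ) (ha : ∀ σ, galP1 σ a = a)
    (σ : Kbar K ≃ₐ[K] Kbar K) (k : ℕ) : Equiv.Perm (preV φ a k) :=
  (Equiv.optionCongr σ.toEquiv).subtypeEquiv fun β => by
    change _ ↔ φ^[k] (galP1 σ β) = a
    rw [← ((hφ σ).iterate_right k).eq, ← (galP1_injective σ).eq_iff, ha]

lemma arbGal_bot_eq_range (hφ : ∀ σ, Function.Commute (galP1 σ) φ)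
    (ha : ∀ σ, galP1 σ a = a) :
    arbGal galP1 ⊥ φ a = Set.range fun σ k => galLevelPerm hφ ha σ k := by
  ext g
  constructor
  · rintro ⟨σ, -, hg⟩
    exact ⟨σ, funext fun k => Equiv.ext fun β => Subtype.ext (hg k β).symm⟩
  · rintro ⟨σ, rfl⟩
    refine ⟨σ, fun x hx => ?_, fun _ _ => rfl⟩
    obtain ⟨c, rfl⟩ := IntermediateField.mem_bot.mp hx
    exact σ.commutes c

/-- Since `φ` is onto, every vertex of height `≤ N` lies below one of height `N`, so the action
on the subtree of height `N` is determined by the action on its top level. -/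
lemma galLevelPerm_eq_iff_eqOn (hφ : ∀ σ, Function.Commute (galP1 σ) φ)
    (ha : ∀ σ, galP1 σ a = a) (hsurj : Function.Surjective φ) (N : ℕ)
    (σ τ : Kbar K ≃ₐ[K] Kbar K) :
    (fun k : Fin (N + 1) => galLevelPerm hφ ha σ k) =
        (fun k : Fin (N + 1) => galLevelPerm hφ ha τ k) ↔
      Set.EqOn (galP1 σ) (galP1 τ) (φ^[N] ⁻¹' {a}) := by
  constructor
  · intro h β hβ
    exact congrArg (fun t : ∀ k : Fin (N + 1), Equiv.Perm (preV φ a k) =>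
      (t ⟨N, N.lt_succ_self⟩ ⟨β, hβ⟩ : P1 (Kbar K))) h
  · intro h
    funext k
    refine Equiv.ext fun ⟨β, hβ⟩ => Subtype.ext ?_
    obtain ⟨γ, rfl⟩ := hsurj.iterate (N - k) β
    have hγ : φ^[N] γ = a := by
      rwa [← Nat.add_sub_cancel' (Nat.le_of_lt_succ k.2), Function.iterate_add_apply]
    change galP1 σ (φ^[N - k] γ) = galP1 τ (φ^[N - k] γ)
    rw [((hφ σ).iterate_right _).eq, ((hφ τ).iterate_right _).eq, h hγ]

lemma levelCard_arbGal_bot (hφ : ∀ σ, Function.Commute (galP1 σ) φ)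
    (ha : ∀ σ, galP1 σ a = a) (hsurj : Function.Surjective φ) (N : ℕ) :
    levelCard (arbGal galP1 ⊥ φ a) N =
      Nat.card (Set.range fun σ : Kbar K ≃ₐ[K] Kbar K =>
        (φ^[N] ⁻¹' {a}).domRestrict (galP1 σ)) := by
  rw [levelCard, arbGal_bot_eq_range hφ ha, ← Set.range_comp]
  exact Nat.card_range_eq_of_eq_iff fun σ τ =>
    (galLevelPerm_eq_iff_eqOn hφ ha hsurj N σ τ).trans Set.domRestrict_eq_domRestrict_iff.symm

end Galois

lemma dimUpper_arbGal_bot_eq_zero_iff {K : Type*} [Field K] {φ ψ : P1 (Kbar K) → P1 (Kbar K)}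
    {a : P1 (Kbar K)} (hφ : ∀ σ, Function.Commute (galP1 σ) φ)
    (hψ : ∀ σ, Function.Commute (galP1 σ) ψ) (ha : ∀ σ, galP1 σ a = a)
    (hφs : Function.Surjective φ) (hψs : Function.Surjective ψ)
    (hφf : ∀ c, (φ ⁻¹' {c}).Finite) (hψf : ∀ c, (ψ ⁻¹' {c}).Finite) {df dg m n : ℕ}
    (hdf : 2 ≤ df) (hdg : 2 ≤ dg) (hm : 1 ≤ m) (hn : 1 ≤ n) (hD : df ^ m = dg ^ n)
    (h : φ^[m] = ψ^[n]) :
    dimUpper df (arbGal galP1 ⊥ φ a) = 0 ↔ dimUpper dg (arbGal galP1 ⊥ ψ a) = 0 := by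
  have := preV_finite hφf a
  have := preV_finite hψf a
  rw [dimUpper_eq_limsup_boxRatio hdf, dimUpper_eq_limsup_boxRatio hdg]
  refine limsup_boxRatio_eq_zero_iff hdf hdg hm hn hD (levelCard_mono _) (levelCard_mono _)
    fun k => ?_
  rw [levelCard_arbGal_bot hφ ha hφs, levelCard_arbGal_bot hψ ha hψs, Function.iterate_mul,
    Function.iterate_mul, h]

theorem arboreal_shared_iterate_small {K : Type*} [Field K] [NumberField K]
    {df dg : ℕ} (hdf2 : 2 ≤ df) (hdg2 : 2 ≤ dg)
    (p q r s : Polynomial K) (hf : IsCoprime p q) (hg : IsCoprime r s)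
    (hdf : max p.natDegree q.natDegree = df) (hdg : max r.natDegree s.natDegree = dg)
    (α : P1 K) (x y : ℝ)
    (hx : HasDim df (arbGal (K := K) galP1 ⊥ (ratAct p q (Kbar K)) (P1K α)) x)
    (hy : HasDim dg (arbGal (K := K) galP1 ⊥ (ratAct r s (Kbar K)) (P1K α)) y)
    (m n : ℕ) (hm : 1 ≤ m) (hn : 1 ≤ n)
    (hshare : (ratAct p q (Kbar K))^[m] = (ratAct r s (Kbar K))^[n]) :
    x = 0 ↔ y = 0 := by
  obtain ⟨P, Q, hPQ, hdPQ, hf_eq⟩ := exists_isCoprime_ratAct_eq (A := Kbar K) hf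
  obtain ⟨R, S, hRS, hdRS, hg_eq⟩ := exists_isCoprime_ratAct_eq (A := Kbar K) hg
  have hPQ₀ : 0 < max P.natDegree Q.natDegree := by omega
  have hRS₀ : 0 < max R.natDegree S.natDegree := by omega
  have hD : df ^ m = dg ^ n := by
    rw [← hdf, ← hdg, ← hdPQ, ← hdRS]
    exact max_natDegree_pow_eq_of_iterate_eq hPQ hRS hPQ₀ hRS₀ (hf_eq ▸ hg_eq ▸ hshare)
  rw [← hx.2, ← hy.2]
  exact dimUpper_arbGal_bot_eq_zero_iff (galP1_commute_ratAct p q) (galP1_commute_ratAct r s)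
    (fun σ => galP1_P1K σ α) (hf_eq ▸ ratAct_surjective hPQ hPQ₀)
    (hg_eq ▸ ratAct_surjective hRS hRS₀) (hf_eq ▸ ratAct_fiber_finite hPQ hPQ₀)
    (hg_eq ▸ ratAct_fiber_finite hRS hRS₀) hdf2 hdg2 hm hn hD hshare
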